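/- In the field ℚ(s,a,b,z) of rational functions, set u = a², v = b², α = (a-b)², β = (a+b)², x(z) = s·(α·z² - β)/(z² - 1), and W(z) = (α-β)·z/(α·z² - β). Then [ u·v·s³ / (x(z)⁴·W(z)⁵) ] · x'(z) = (1/(8(α-β)²)) · ( β/z⁴ - (2β+α)/z² + (2α+β) - α·z² ), where x'(z) denotes the derivative of x(z) with respect to z. -/

import Mathlib

noncomputable section

/-- The field `ℚ(s,a,b,z)` of rational functions in four indeterminates over `ℚ`. -/
abbrev F4 : Type := FractionRing (MvPolynomial (Fin 4) ℚ)

def fs : F4 := algebraMap (MvPolynomial (Fin 4) ℚ) F4 (MvPolynomial.X 0)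
def fa : F4 := algebraMap (MvPolynomial (Fin 4) ℚ) F4 (MvPolynomial.X 1)
def fb : F4 := algebraMap (MvPolynomial (Fin 4) ℚ) F4 (MvPolynomial.X 2)
def fz : F4 := algebraMap (MvPolynomial (Fin 4) ℚ) F4 (MvPolynomial.X 3)

def fu : F4 := fa ^ 2
def fv : F4 := fb ^ 2
def fα : F4 := (fa - fb) ^ 2
def fβ : F4 := (fa + fb) ^ 2
/-- `x(z) = s(αz²-β)/(z²-1)` -/
def fx : F4 := fs * (fα * fz ^ 2 - fβ) / (fz ^ 2 - 1)
/-- `W(z) = (α-β)z/(αz²-β)`, equal to `sqrt(1-2s(u+v)/x+s²(u-v)²/x²)` on the curve. -/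
def fW : F4 := (fα - fβ) * fz / (fα * fz ^ 2 - fβ)

set_option maxHeartbeats 1000000 in
/-- An element of `F4` coming from a polynomial with a nonzero evaluation is nonzero. -/
lemma amap_ne (p : MvPolynomial (Fin 4) ℚ)
    (h : MvPolynomial.eval (![1,2,1,2] : Fin 4 → ℚ) p ≠ 0) :
    algebraMap (MvPolynomial (Fin 4) ℚ) F4 p ≠ 0 := by
  intro h0
  apply h
  have : p = 0 := IsFractionRing.injective (MvPolynomial (Fin 4) ℚ) F4 (by simpa using h0)
  simp [this]

lemma fs_ne : fs ≠ 0 := by rw [fs]; exact amap_ne _ (by norm_num)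

lemma fz_ne : fz ≠ 0 := by rw [fz]; exact amap_ne _ (by simp <;> norm_num)

lemma den_ne : fz ^ 2 - 1 ≠ 0 := by
  have : fz ^ 2 - 1 = algebraMap (MvPolynomial (Fin 4) ℚ) F4
      ((MvPolynomial.X 3) ^ 2 - 1) := by simp [fz]
  rw [this]; exact amap_ne _ (by simp <;> norm_num)

lemma q_ne : fα * fz ^ 2 - fβ ≠ 0 := by
  have : fα * fz ^ 2 - fβ = algebraMap (MvPolynomial (Fin 4) ℚ) F4
      ((MvPolynomial.X 1 - MvPolynomial.X 2) ^ 2 * (MvPolynomial.X 3) ^ 2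
        - (MvPolynomial.X 1 + MvPolynomial.X 2) ^ 2) := by
    simp [fα, fβ, fa, fb, fz]
  rw [this]; exact amap_ne _ (by simp <;> norm_num)

lemma ab_ne : fα - fβ ≠ 0 := by
  have : fα - fβ = algebraMap (MvPolynomial (Fin 4) ℚ) F4
      ((MvPolynomial.X 1 - MvPolynomial.X 2) ^ 2
        - (MvPolynomial.X 1 + MvPolynomial.X 2) ^ 2) := by
    simp [fα, fβ, fa, fb]
  rw [this]; exact amap_ne _ (by simp <;> norm_num)

set_option maxHeartbeats 1000000 in
/-- The core rational-function identity, in a generic field of characteristic zero. -/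
lemma core_identity {K : Type} [Field K] [CharZero K] (A B S Z : K)
    (h1 : S ≠ 0) (h2 : Z ≠ 0) (h3 : Z ^ 2 - 1 ≠ 0) (h4 : A * Z ^ 2 - B ≠ 0)
    (h5 : A - B ≠ 0) :
    ((A - B) ^ 2 / 16 * S ^ 3
        / ((S * (A * Z ^ 2 - B) / (Z ^ 2 - 1)) ^ 4 * ((A - B) * Z / (A * Z ^ 2 - B)) ^ 5))
      * (2 * S * Z * (B - A) / (Z ^ 2 - 1) ^ 2)
    = (1 / (8 * (A - B) ^ 2)) * (B / Z ^ 4 - (2 * B + A) / Z ^ 2 + (2 * A + B) - A * Z ^ 2) := by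
  have h6 : S * (A * Z ^ 2 - B) ≠ 0 := mul_ne_zero h1 h4
  have h7 : (A - B) * Z ≠ 0 := mul_ne_zero h5 h2
  have hR : (1 / (8 * (A - B) ^ 2)) * (B / Z ^ 4 - (2 * B + A) / Z ^ 2 + (2 * A + B) - A * Z ^ 2)
      = (B - (2 * B + A) * Z ^ 2 + (2 * A + B) * Z ^ 4 - A * Z ^ 6)
          / (8 * (A - B) ^ 2 * Z ^ 4) := by
    field_simp
  rw [hR, div_pow, div_pow, div_mul_div_comm, div_mul_eq_mul_div]
  rw [show (S * (A * Z ^ 2 - B)) ^ 4 / (Z ^ 2 - 1) ^ 4 * (((A - B) * Z) ^ 5 / (A * Z ^ 2 - B) ^ 5)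
        * (Z ^ 2 - 1) ^ 2
      = (S * (A * Z ^ 2 - B)) ^ 4 * ((A - B) * Z) ^ 5 * (Z ^ 2 - 1) ^ 2
          / ((Z ^ 2 - 1) ^ 4 * (A * Z ^ 2 - B) ^ 5) from by
    rw [div_mul_div_comm, div_mul_eq_mul_div]]
  rw [div_div_eq_mul_div, div_eq_div_iff
    (mul_ne_zero (mul_ne_zero (pow_ne_zero _ h6) (pow_ne_zero _ h7)) (pow_ne_zero _ h3))
    (mul_ne_zero (mul_ne_zero (by norm_num) (pow_ne_zero _ h5)) (pow_ne_zero _ h2))]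
  ring

set_option maxHeartbeats 1000000 in
/-- The form `W_{1,1}` of the dessin spectral curve: the genus-one one-point function
of dessins, rewritten via the global coordinate `z`, equals
`(1/(8(α-β)²))(β/z⁴ - (2β+α)/z² + (2α+β) - αz²)`. The derivative with respect to `z` is
taken via the (unique) derivation `∂` on `ℚ(s,a,b,z)` killing `s, a, b` with `∂z = 1`. -/
theorem dessin_W11_in_global_coordinate
    (D : Derivation ℚ F4 F4)
    (hDs : D fs = 0) (hDa : D fa = 0) (hDb : D fb = 0) (hDz : D fz = 1) :
    (fu * fv * fs ^ 3 / (fx ^ 4 * fW ^ 5)) * D fx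
      = (1 / (8 * (fα - fβ) ^ 2)) *
          (fβ / fz ^ 4 - (2 * fβ + fα) / fz ^ 2 + (2 * fα + fβ) - fα * fz ^ 2) := by
  have hDα : D fα = 0 := by
    have h1 : D (fa - fb) = 0 := by rw [map_sub, hDa, hDb, sub_zero]
    rw [fα, pow_two, Derivation.leibniz, h1]; simp
  have hDβ : D fβ = 0 := by
    have h1 : D (fa + fb) = 0 := by rw [map_add, hDa, hDb, add_zero]
    rw [fβ, pow_two, Derivation.leibniz, h1]; simp
  have hxeq : fx * (fz ^ 2 - 1) = fs * (fα * fz ^ 2 - fβ) := by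
    rw [fx, div_mul_cancel₀ _ den_ne]
  have h := congrArg D hxeq
  simp only [Derivation.leibniz, Derivation.leibniz_pow, map_sub, map_one,
    Derivation.map_one_eq_zero, hDα, hDβ, hDs, hDz, smul_eq_mul, nsmul_eq_mul,
    Nat.cast_ofNat] at h
  have hDx : D fx = 2 * fs * fz * (fβ - fα) / (fz ^ 2 - 1) ^ 2 := by
    rw [eq_div_iff (pow_ne_zero 2 den_ne)]
    linear_combination (fz ^ 2 - 1) * h - 2 * fz * hxeq
  have huv : fu * fv = (fα - fβ) ^ 2 / 16 := by
    simp only [fu, fv, fα, fβ]; ring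
  rw [huv, hDx]
  rw [show fx = fs * (fα * fz ^ 2 - fβ) / (fz ^ 2 - 1) from rfl,
    show fW = (fα - fβ) * fz / (fα * fz ^ 2 - fβ) from rfl]
  exact core_identity fα fβ fs fz fs_ne fz_ne den_ne q_ne ab_ne

end
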